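/- For all n ≥ 0, c_1⁵·α^n + c_2⁵·β^n + c_3⁵·γ^n + c_4⁵·δ^n = (1/563²)·X_n, where X_n is the Tetranacci-type sequence with X_0 = 500, X_1 = 1423, X_2 = 2598, X_3 = 4986 and X_n = X_{n−1} + X_{n−2} + X_{n−3} + X_{n−4} for n ≥ 4. -/

import Mathlib

/-!
Write f = x⁴ − x³ − x² − x − 1. By Vieta, (α − β)(α − γ)(α − δ) = f'(α), so c₁ = α²/f'(α), and
modulo f one has x²/f'(x) = (86x³ − 61x² − 71x − 87)/563, where 563 = −disc f. Raising to the fifth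
power and reducing again, c₁⁵ = Q(α)/563⁵ for a fixed integer cubic Q. The left side is therefore a
combination of four shifted power sums αᵏ + βᵏ + γᵏ + δᵏ, which are the Tetranacci–Lucas numbers
4, 1, 3, 7, …; both sides satisfy the Tetranacci recurrence, so it suffices to compare four initial
values of integer sequences.
-/

/-- A Tetranacci-type sequence. -/
def seqX : ℕ → ℤ
  | 0 => 500
  | 1 => 1423
  | 2 => 2598
  | 3 => 4986
  | n + 4 => seqX (n + 3) + seqX (n + 2) + seqX (n + 1) + seqX n

def IsTetranacci {R : Type*} [Add R] (u : ℕ → R) : Prop :=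
  ∀ n, u (n + 4) = u (n + 3) + u (n + 2) + u (n + 1) + u n

namespace IsTetranacci

variable {R : Type*}

theorem eq_of_eq_of_lt_four [Add R] {u v : ℕ → R} (hu : IsTetranacci u) (hv : IsTetranacci v)
    (h : ∀ k < 4, u k = v k) : ∀ n, u n = v n
  | 0 => h 0 (by norm_num)
  | 1 => h 1 (by norm_num)
  | 2 => h 2 (by norm_num)
  | 3 => h 3 (by norm_num)
  | n + 4 => by
    rw [hu, hv, eq_of_eq_of_lt_four hu hv h n, eq_of_eq_of_lt_four hu hv h (n + 1),
      eq_of_eq_of_lt_four hu hv h (n + 2), eq_of_eq_of_lt_four hu hv h (n + 3)]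

theorem add [AddCommSemigroup R] {u v : ℕ → R} (hu : IsTetranacci u) (hv : IsTetranacci v) :
    IsTetranacci fun n ↦ u n + v n := fun n ↦ by
  dsimp only; rw [hu, hv]; ac_rfl

theorem const_mul [NonUnitalNonAssocSemiring R] {u : ℕ → R} (hu : IsTetranacci u) (a : R) :
    IsTetranacci fun n ↦ a * u n := fun n ↦ by
  simp only [hu n, mul_add]

theorem comp_add [Add R] {u : ℕ → R} (hu : IsTetranacci u) (j : ℕ) :
    IsTetranacci fun n ↦ u (n + j) := fun n ↦ by
  simpa only [add_right_comm _ _ j] using hu (n + j)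

theorem intCast [AddGroupWithOne R] {u : ℕ → ℤ} (hu : IsTetranacci u) :
    IsTetranacci fun n ↦ (u n : R) := fun n ↦ by
  dsimp only; rw [hu]; push_cast; rfl

theorem pow [CommRing R] {r : R} (hr : r ^ 4 - r ^ 3 - r ^ 2 - r - 1 = 0) :
    IsTetranacci (r ^ ·) := fun n ↦ by
  linear_combination r ^ n * hr

end IsTetranacci

theorem isTetranacci_seqX : IsTetranacci seqX := fun _ ↦ rfl

def tetraLucas : ℕ → ℤ
  | 0 => 4
  | 1 => 1
  | 2 => 3
  | 3 => 7
  | n + 4 => tetraLucas (n + 3) + tetraLucas (n + 2) + tetraLucas (n + 1) + tetraLucas n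

theorem isTetranacci_tetraLucas : IsTetranacci tetraLucas := fun _ ↦ rfl

theorem mul_seqX_eq_sum_tetraLucas (n : ℕ) :
    563 ^ 3 * seqX n = -6926089619 * tetraLucas n + 7772713818 * tetraLucas (n + 1)
      + 6363786613 * tetraLucas (n + 2) + 12866722617 * tetraLucas (n + 3) := by
  refine (isTetranacci_seqX.const_mul _).eq_of_eq_of_lt_four
    (v := fun n ↦ -6926089619 * tetraLucas n + 7772713818 * tetraLucas (n + 1)
      + 6363786613 * tetraLucas (n + 2) + 12866722617 * tetraLucas (n + 3)) ?_ ?_ n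
  · have hL := isTetranacci_tetraLucas
    exact (((hL.const_mul _).add ((hL.comp_add 1).const_mul _)).add
      ((hL.comp_add 2).const_mul _)).add ((hL.comp_add 3).const_mul _)
  · intro k hk
    interval_cases k <;> rfl

section Quartic

variable {R : Type*} [CommRing R] [NoZeroDivisors R] {p q r s a b c d : R}

theorem quartic_vieta (ha : a ^ 4 + p * a ^ 3 + q * a ^ 2 + r * a + s = 0)
    (hb : b ^ 4 + p * b ^ 3 + q * b ^ 2 + r * b + s = 0)
    (hc : c ^ 4 + p * c ^ 3 + q * c ^ 2 + r * c + s = 0)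
    (hd : d ^ 4 + p * d ^ 3 + q * d ^ 2 + r * d + s = 0)
    (hab : a ≠ b) (hac : a ≠ c) (had : a ≠ d) (hbc : b ≠ c) (hbd : b ≠ d) (hcd : c ≠ d) :
    a + b + c + d = -p ∧ a * b + a * c + a * d + b * c + b * d + c * d = q ∧
      a * b * c + a * b * d + a * c * d + b * c * d = -r ∧ a * b * c * d = s := by
  -- divided differences of the quartic at a, then at (a, b), then at (a, b, c)
  have g : ∀ x, x ≠ a → x ^ 4 + p * x ^ 3 + q * x ^ 2 + r * x + s = 0 →
      a ^ 3 + a ^ 2 * x + a * x ^ 2 + x ^ 3 + p * (a ^ 2 + a * x + x ^ 2) + q * (a + x) + r = 0 :=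
    fun x hx hfx ↦
      (mul_eq_zero.mp (by linear_combination hfx - ha)).resolve_left (sub_ne_zero.mpr hx)
  have h : ∀ x, x ≠ b → x ≠ a → x ^ 4 + p * x ^ 3 + q * x ^ 2 + r * x + s = 0 →
      a ^ 2 + a * (b + x) + b ^ 2 + b * x + x ^ 2 + p * (a + b + x) + q = 0 :=
    fun x hxb hxa hfx ↦
      (mul_eq_zero.mp (by linear_combination g x hxa hfx - g b hab.symm hb)).resolve_left
        (sub_ne_zero.mpr hxb)
  have e₁ : a + b + c + d = -p := by
    have hdiff : (c - d) * (a + b + c + d + p) = 0 := by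
      linear_combination h c hbc.symm hac.symm hc - h d hbd.symm had.symm hd
    linear_combination (mul_eq_zero.mp hdiff).resolve_left (sub_ne_zero.mpr hcd)
  have e₂ : a * b + a * c + a * d + b * c + b * d + c * d = q := by
    linear_combination (a + b + c) * e₁ - h c hbc.symm hac.symm hc
  have e₃ : a * b * c + a * b * d + a * c * d + b * c * d = -r := by
    linear_combination g b hab.symm hb - ((a + b) ^ 2 - a * b) * e₁ + (a + b) * e₂
  refine ⟨e₁, e₂, e₃, ?_⟩
  linear_combination -ha + a ^ 3 * e₁ - a ^ 2 * e₂ + a * e₃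

end Quartic

section TetranacciPolynomial

theorem power_sum_eq_tetraLucas {R : Type*} [CommRing R] [NoZeroDivisors R] {a b c d : R}
    (ha : a ^ 4 - a ^ 3 - a ^ 2 - a - 1 = 0) (hb : b ^ 4 - b ^ 3 - b ^ 2 - b - 1 = 0)
    (hc : c ^ 4 - c ^ 3 - c ^ 2 - c - 1 = 0) (hd : d ^ 4 - d ^ 3 - d ^ 2 - d - 1 = 0)
    (hab : a ≠ b) (hac : a ≠ c) (had : a ≠ d) (hbc : b ≠ c) (hbd : b ≠ d) (hcd : c ≠ d) (n : ℕ) :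
    a ^ n + b ^ n + c ^ n + d ^ n = tetraLucas n := by
  obtain ⟨e₁, e₂, e₃, -⟩ := quartic_vieta (p := -1) (q := -1) (r := -1) (s := -1)
    (by linear_combination ha) (by linear_combination hb) (by linear_combination hc)
    (by linear_combination hd) hab hac had hbc hbd hcd
  have hpow := (((IsTetranacci.pow ha).add (.pow hb)).add (.pow hc)).add (.pow hd)
  refine hpow.eq_of_eq_of_lt_four isTetranacci_tetraLucas.intCast (fun k hk ↦ ?_) n
  interval_cases k <;> simp only [tetraLucas] <;> push_cast
  · norm_num
  · linear_combination e₁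
  · linear_combination (a + b + c + d + 1) * e₁ - 2 * e₂
  · linear_combination ((a + b + c + d) ^ 2 + (a + b + c + d) + 4) * e₁
      - 3 * (a + b + c + d) * e₂ + 3 * e₃

theorem cubic_pow_five {R : Type*} [CommRing R] {a : R}
    (ha : a ^ 4 - a ^ 3 - a ^ 2 - a - 1 = 0) :
    (86 * a ^ 3 - 61 * a ^ 2 - 71 * a - 87) ^ 5
      = 12866722617 * a ^ 3 + 6363786613 * a ^ 2 + 7772713818 * a - 6926089619 := by
  linear_combination (4704270176 * a ^ 11 - 11979478704 * a ^ 10 - 3026354448 * a ^ 9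
    + 4211238024 * a ^ 8 + 40819254398 * a ^ 7 - 4579527711 * a ^ 6
    - 30666174712 * a ^ 5 - 51280856086 * a ^ 4 + 15329638889 * a ^ 3
    + 28921720975 * a ^ 2 + 30052459385 * a - 1941880412) * ha

variable {K : Type*} [Field K] [CharZero K] {a b c d : K}

theorem sq_div_derivative_eq (ha : a ^ 4 - a ^ 3 - a ^ 2 - a - 1 = 0) :
    a ^ 2 / (4 * a ^ 3 - 3 * a ^ 2 - 2 * a - 1)
      = (86 * a ^ 3 - 61 * a ^ 2 - 71 * a - 87) / 563 := by
  have key : 563 * a ^ 2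
      = (86 * a ^ 3 - 61 * a ^ 2 - 71 * a - 87) * (4 * a ^ 3 - 3 * a ^ 2 - 2 * a - 1) := by
    linear_combination (-(344 * a ^ 2 - 158 * a - 87)) * ha
  have ha₀ : a ≠ 0 := by rintro rfl; norm_num at ha
  have hD : 4 * a ^ 3 - 3 * a ^ 2 - 2 * a - 1 ≠ 0 :=
    right_ne_zero_of_mul (key ▸ mul_ne_zero (by norm_num) (pow_ne_zero 2 ha₀))
  rw [div_eq_div_iff hD (by norm_num)]
  linear_combination key

theorem tetra_coeff_pow_five (ha : a ^ 4 - a ^ 3 - a ^ 2 - a - 1 = 0)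
    (hb : b ^ 4 - b ^ 3 - b ^ 2 - b - 1 = 0) (hc : c ^ 4 - c ^ 3 - c ^ 2 - c - 1 = 0)
    (hd : d ^ 4 - d ^ 3 - d ^ 2 - d - 1 = 0)
    (hab : a ≠ b) (hac : a ≠ c) (had : a ≠ d) (hbc : b ≠ c) (hbd : b ≠ d) (hcd : c ≠ d) :
    (a ^ 2 / ((a - b) * (a - c) * (a - d))) ^ 5
      = (12866722617 * a ^ 3 + 6363786613 * a ^ 2 + 7772713818 * a - 6926089619) / 563 ^ 5 := by
  obtain ⟨e₁, e₂, e₃, -⟩ := quartic_vieta (p := -1) (q := -1) (r := -1) (s := -1)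
    (by linear_combination ha) (by linear_combination hb) (by linear_combination hc)
    (by linear_combination hd) hab hac had hbc hbd hcd
  have hD : (a - b) * (a - c) * (a - d) = 4 * a ^ 3 - 3 * a ^ 2 - 2 * a - 1 := by
    linear_combination (-3 * a ^ 2) * e₁ + 2 * a * e₂ - e₃
  rw [hD, sq_div_derivative_eq ha, div_pow, cubic_pow_five ha]

end TetranacciPolynomial

theorem tetra_c_fifth (α β γ δ : ℂ)
    (hα : α ^ 4 - α ^ 3 - α ^ 2 - α - 1 = 0) (hβ : β ^ 4 - β ^ 3 - β ^ 2 - β - 1 = 0)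
    (hγ : γ ^ 4 - γ ^ 3 - γ ^ 2 - γ - 1 = 0) (hδ : δ ^ 4 - δ ^ 3 - δ ^ 2 - δ - 1 = 0)
    (hαβ : α ≠ β) (hαγ : α ≠ γ) (hαδ : α ≠ δ) (hβγ : β ≠ γ) (hβδ : β ≠ δ) (hγδ : γ ≠ δ)
    (c₁ c₂ c₃ c₄ : ℂ)
    (hc₁ : c₁ = α ^ 2 / ((α - β) * (α - γ) * (α - δ)))
    (hc₂ : c₂ = β ^ 2 / ((β - α) * (β - γ) * (β - δ)))
    (hc₃ : c₃ = γ ^ 2 / ((γ - α) * (γ - β) * (γ - δ)))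
    (hc₄ : c₄ = δ ^ 2 / ((δ - α) * (δ - β) * (δ - γ))) (n : ℕ) :
    c₁ ^ 5 * α ^ n + c₂ ^ 5 * β ^ n + c₃ ^ 5 * γ ^ n + c₄ ^ 5 * δ ^ n
      = (1 / 563 ^ 2 : ℂ) * seqX n := by
  rw [hc₁, hc₂, hc₃, hc₄, tetra_coeff_pow_five hα hβ hγ hδ hαβ hαγ hαδ hβγ hβδ hγδ,
    tetra_coeff_pow_five hβ hα hγ hδ hαβ.symm hβγ hβδ hαγ hαδ hγδ,
    tetra_coeff_pow_five hγ hα hβ hδ hαγ.symm hβγ.symm hγδ hαβ hαδ hβδ,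
    tetra_coeff_pow_five hδ hα hβ hγ hαδ.symm hβδ.symm hγδ.symm hαβ hαγ hβγ]
  have hP := fun k ↦ power_sum_eq_tetraLucas hα hβ hγ hδ hαβ hαγ hαδ hβγ hβδ hγδ k
  have hX := congrArg (Int.cast : ℤ → ℂ) (mul_seqX_eq_sum_tetraLucas n)
  push_cast at hX
  linear_combination (-6926089619 * hP n + 7772713818 * hP (n + 1) + 6363786613 * hP (n + 2)
    + 12866722617 * hP (n + 3) - hX) / 563 ^ 5
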